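/- Any matrix A ∈ 𝐔_m all of whose entries are equal to either 0 or 1 is an extreme point of the convex set 𝐔_m. -/

import Mathlib

open Matrix Finset

def IsInU {m : ℕ} (A : Matrix (Fin m) (Fin m) ℝ) : Prop :=
  A.IsSymm ∧ (∀ i j, 0 ≤ A i j) ∧
    ∀ α : Finset (Fin m), ∑ i ∈ α, ∑ j ∈ α, A i j ≤ (α.card : ℝ)

def IsInUtop {m : ℕ} (A : Matrix (Fin m) (Fin m) ℝ) : Prop :=
  IsInU A ∧ ∑ i, ∑ j, A i j = (m : ℝ)

def IsExtremeIn {m : ℕ} (S : Matrix (Fin m) (Fin m) ℝ → Prop)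
    (A : Matrix (Fin m) (Fin m) ℝ) : Prop :=
  S A ∧ ∀ A₁ A₂, S A₁ → S A₂ → A₁ + A₂ = (2 : ℝ) • A → A₁ = A ∧ A₂ = A

def IsRowStochastic {m : ℕ} (X : Matrix (Fin m) (Fin m) ℝ) : Prop :=
  (∀ i j, 0 ≤ X i j) ∧ ∀ i, ∑ j, X i j = 1

def IsSubstochastic {m : ℕ} (X : Matrix (Fin m) (Fin m) ℝ) : Prop :=
  (∀ i j, 0 ≤ X i j) ∧ ∀ i, ∑ j, X i j ≤ 1

/-! Testing α = {i} and α = {i, j} (with symmetry) shows that every entry of a matrix in 𝐔_m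
lies in [0, 1]. Extremality can then be checked entrywise, and 0 and 1 are extreme points
of [0, 1]. -/

lemma eq_of_add_eq_two_mul_of_mem_Icc {K : Type*} [Field K] [LinearOrder K] [IsStrictOrderedRing K]
    {a b x : K} (ha : a ∈ Set.Icc 0 1) (hb : b ∈ Set.Icc 0 1) (hx : x = 0 ∨ x = 1)
    (hab : a + b = 2 * x) : a = x := by
  obtain ⟨ha₀, ha₁⟩ := ha
  obtain ⟨hb₀, hb₁⟩ := hb
  rcases hx with rfl | rfl <;> linarith

namespace IsInU

variable {m : ℕ} {X : Matrix (Fin m) (Fin m) ℝ}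

lemma nonneg (hX : IsInU X) (i j : Fin m) : 0 ≤ X i j := hX.2.1 i j

lemma apply_le_one (hX : IsInU X) (i j : Fin m) : X i j ≤ 1 := by
  obtain ⟨hsymm, hnonneg, hsum⟩ := hX
  rcases eq_or_ne i j with rfl | hij
  · simpa using hsum {i}
  · have hpair := hsum {i, j}
    rw [card_pair hij, sum_pair hij, sum_pair hij, sum_pair hij, hsymm.apply i j] at hpair
    have := hnonneg i i
    have := hnonneg j j
    push_cast at hpair
    linarith

lemma apply_mem_Icc (hX : IsInU X) (i j : Fin m) : X i j ∈ Set.Icc 0 1 :=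
  ⟨hX.nonneg i j, hX.apply_le_one i j⟩

end IsInU

theorem stmt_8 {m : ℕ} (A : Matrix (Fin m) (Fin m) ℝ) (hA : IsInU A)
    (hval : ∀ i j, A i j = 0 ∨ A i j = 1) :
    IsExtremeIn IsInU A := by
  refine ⟨hA, fun A₁ A₂ h₁ h₂ hsum => ⟨?_, ?_⟩⟩ <;> ext i j
  · have hentry : A₁ i j + A₂ i j = 2 * A i j := by simpa using congrFun₂ hsum i j
    exact eq_of_add_eq_two_mul_of_mem_Icc (h₁.apply_mem_Icc i j) (h₂.apply_mem_Icc i j)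
      (hval i j) hentry
  · have hentry : A₂ i j + A₁ i j = 2 * A i j := by simpa [add_comm] using congrFun₂ hsum i j
    exact eq_of_add_eq_two_mul_of_mem_Icc (h₂.apply_mem_Icc i j) (h₁.apply_mem_Icc i j)
      (hval i j) hentry
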